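/- Suppose F = ⟨f_α : α < γ⟩ is a very strongly increasing sequence of functions from ω to ω, where γ is a limit ordinal of cofinality ω₁. Then the following are equivalent: (1) there exists a very strongly increasing sequence of successor length extending F; (2) there exists a function f : ω → ω such that the set {α < γ : f_α <₀ f} contains a club subset of γ. -/

import Mathlib

/-!
Any extension of `F` of successor length has a term at position `γ`, and clause (i) of very
strong increase at the limit `γ` (of uncountable cofinality) yields the club. Conversely,
appending `f` at position `γ` works: for `α < γ` pick `x > α` in the club, so that
`f_α <* f_x <₀ f`; and clause (ii) says nothing at `γ` itself, because `β + ω` has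
cofinality `ω` while `γ` has cofinality `ω₁`.
-/

open Ordinal Cardinal

/-- `f <ₙ g` : `f m < g m` for all `m ∈ ω \ n`. -/
def LtN (n : ℕ) (f g : ℕ → Ordinal) : Prop := ∀ m : ℕ, n ≤ m → f m < g m

/-- `f ≤ₙ g` : `f m ≤ g m` for all `m ∈ ω \ n`. -/
def LeN (n : ℕ) (f g : ℕ → Ordinal) : Prop := ∀ m : ℕ, n ≤ m → f m ≤ g m

/-- `f <* g` : `f m < g m` for all but finitely many `m`. -/
def LtStar (f g : ℕ → Ordinal) : Prop := ∃ n : ℕ, LtN n f g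

/-- `f =* g` : `f m = g m` for all but finitely many `m`. -/
def EqStar (f g : ℕ → Ordinal) : Prop := ∃ n : ℕ, ∀ m : ℕ, n ≤ m → f m = g m

/-- `C` is a club (closed unbounded) subset of the (limit) ordinal `β`:
`C ⊆ β`, `C` is closed in `β`, and `C` is unbounded in `β`. -/
def IsClubIn (C : Set Ordinal) (β : Ordinal) : Prop :=
  C ⊆ Set.Iio β ∧
  (∀ α < β, α ≠ 0 → (∀ δ < α, ∃ x ∈ C, δ < x ∧ x < α) → α ∈ C) ∧
  (∀ δ < β, ∃ x ∈ C, δ < x)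

/-- `S` is a stationary subset of `lam`: it meets every club subset of `lam`. -/
def StationaryIn (S : Set Ordinal) (lam : Ordinal) : Prop :=
  ∀ C : Set Ordinal, IsClubIn C lam → (S ∩ C).Nonempty

/-- `⟨f α : α < γ⟩` is a strongly increasing sequence of functions from `ω` to the
ordinals. -/
def StronglyIncreasingOn (f : Ordinal → ℕ → Ordinal) (γ : Ordinal) : Prop :=
  (∀ α β : Ordinal, α < β → β < γ → LtStar (f α) (f β)) ∧
  (∀ β < γ, Order.IsSuccLimit β →
    ∃ C : Set Ordinal, ∃ n : ℕ, IsClubIn C β ∧ ∀ α ∈ C, LtN n (f α) (f β))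

/-- `⟨f α : α < γ⟩` is a very strongly increasing sequence: it is strongly increasing,
the witnessing `n_β` can be taken to be `0` at limits of uncountable cofinality, and
condition (2) of Definition 1.2 holds at ordinals of the form `β + ω`. -/
def VeryStronglyIncreasingOn (f : Ordinal → ℕ → Ordinal) (γ : Ordinal) : Prop :=
  StronglyIncreasingOn f γ ∧
  (∀ β < γ, Order.IsSuccLimit β → Cardinal.aleph0 < β.cof →
    ∃ C : Set Ordinal, IsClubIn C β ∧ ∀ α ∈ C, LtN 0 (f α) (f β)) ∧
  (∀ β : Ordinal, β + Ordinal.omega0 < γ → ∀ n : ℕ,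
    ∃ α : Ordinal, β + 1 ≤ α ∧ α < β + Ordinal.omega0 ∧
      LeN n (f α) (f (β + Ordinal.omega0)) ∧ ∀ m : ℕ, m < n → f α m = 0)

/-- `g` is an exact upper bound for `⟨f α : α < γ⟩`. -/
def IsEUB (f : Ordinal → ℕ → Ordinal) (γ : Ordinal) (g : ℕ → Ordinal) : Prop :=
  (∀ α < γ, LtStar (f α) g) ∧
  (∀ h : ℕ → Ordinal, LtStar h g → ∃ α < γ, LtStar h (f α))

/-- `β` is good for `⟨f α : α < γ⟩` (only the restriction `f ↾ β` matters). -/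
def IsGoodFor (f : Ordinal → ℕ → Ordinal) (β : Ordinal) : Prop :=
  Cardinal.aleph0 < β.cof ∧
  ∃ h : ℕ → Ordinal, IsEUB f β h ∧ ∃ n : ℕ, ∀ i : ℕ, n ≤ i → (h i).cof = β.cof

/-- The Chang's Conjecture principle `(κ, lam) ↠ (δ, γ)`: every structure over a
countable first-order language with universe of cardinality `κ`, together with a subset
`B` of the universe of cardinality `lam`, admits an elementary substructure `X` of
cardinality `δ` with `|X ∩ B| = γ`. -/
def ChangsConjecture (κ lam δ γ : Cardinal) : Prop :=
  ∀ (L : FirstOrder.Language.{0, 0}) (M : Type) (_ : L.Structure M),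
    L.card ≤ Cardinal.aleph0 → Cardinal.mk M = κ →
    ∀ B : Set M, Cardinal.mk B = lam →
      ∃ X : L.ElementarySubstructure M,
        Cardinal.mk X = δ ∧ Cardinal.mk ((X : Set M) ∩ B : Set M) = γ

theorem LtN.ltStar {n : ℕ} {f g : ℕ → Ordinal} (h : LtN n f g) : LtStar f g := ⟨n, h⟩

theorem LtStar.trans {f g h : ℕ → Ordinal} (hfg : LtStar f g) (hgh : LtStar g h) :
    LtStar f h := by
  obtain ⟨n₁, h₁⟩ := hfg
  obtain ⟨n₂, h₂⟩ := hgh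
  exact ⟨max n₁ n₂, fun m hm =>
    (h₁ m (le_of_max_le_left hm)).trans (h₂ m (le_of_max_le_right hm))⟩

theorem Order.IsSuccLimit.lt_add_one_of_le {γ δ : Ordinal} (hγ : Order.IsSuccLimit γ)
    (h : γ ≤ δ + 1) : γ < δ + 1 :=
  h.lt_of_ne fun e => hγ.succ_ne δ (by rw [Order.succ_eq_add_one, e])

theorem Ordinal.add_omega0_ne_of_cof_ne {γ : Ordinal} (hγ : γ.cof ≠ ℵ₀) (β : Ordinal) :
    β + ω ≠ γ := by
  rintro rfl
  exact hγ (by rw [cof_add β omega0_ne_zero, cof_omega0])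

namespace VeryStronglyIncreasingOn

variable {F G : Ordinal → ℕ → Ordinal} {γ : Ordinal}

theorem congr (hF : VeryStronglyIncreasingOn F γ) (h : ∀ α < γ, G α = F α) :
    VeryStronglyIncreasingOn G γ := by
  obtain ⟨⟨hlt, hlim⟩, hcof, hω⟩ := hF
  refine ⟨⟨fun α β hαβ hβ => ?_, fun β hβ hβl => ?_⟩, fun β hβ hβl hβc => ?_, fun β hβ n => ?_⟩
  · rw [h α (hαβ.trans hβ), h β hβ]
    exact hlt α β hαβ hβ
  · obtain ⟨C, n, hC, hCF⟩ := hlim β hβ hβl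
    refine ⟨C, n, hC, fun α hα => ?_⟩
    rw [h α ((hC.1 hα).trans hβ), h β hβ]
    exact hCF α hα
  · obtain ⟨C, hC, hCF⟩ := hcof β hβ hβl hβc
    refine ⟨C, hC, fun α hα => ?_⟩
    rw [h α ((hC.1 hα).trans hβ), h β hβ]
    exact hCF α hα
  · obtain ⟨α, hβα, hαω, hle, hzero⟩ := hω β hβ n
    refine ⟨α, hβα, hαω, ?_, ?_⟩
    · rw [h α (hαω.trans hβ), h _ hβ]
      exact hle
    · rw [h α (hαω.trans hβ)]
      exact hzero

theorem succ_of_club (hG : VeryStronglyIncreasingOn G γ) (hγ : γ.cof ≠ ℵ₀)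
    {C : Set Ordinal} (hC : IsClubIn C γ) (hCG : ∀ α ∈ C, LtN 0 (G α) (G γ)) :
    VeryStronglyIncreasingOn G (γ + 1) := by
  obtain ⟨⟨hlt, hlim⟩, hcof, hω⟩ := hG
  have below_or_eq : ∀ β < γ + 1, β < γ ∨ β = γ := fun β hβ =>
    (Order.lt_add_one_iff.mp hβ).lt_or_eq
  refine ⟨⟨fun α β hαβ hβ => ?_, fun β hβ hβl => ?_⟩, fun β hβ hβl hβc => ?_, fun β hβ n => ?_⟩
  · obtain hβ | rfl := below_or_eq β hβ
    · exact hlt α β hαβ hβ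
    · obtain ⟨x, hx, hαx⟩ := hC.2.2 α hαβ
      exact (hlt α x hαx (hC.1 hx)).trans (hCG x hx).ltStar
  · obtain hβ | rfl := below_or_eq β hβ
    · exact hlim β hβ hβl
    · exact ⟨C, 0, hC, hCG⟩
  · obtain hβ | rfl := below_or_eq β hβ
    · exact hcof β hβ hβl hβc
    · exact ⟨C, hC, hCG⟩
  · obtain hβ | heq := below_or_eq _ hβ
    · exact hω β hβ n
    · exact absurd heq (add_omega0_ne_of_cof_ne hγ β)

end VeryStronglyIncreasingOn

/-- If `F = ⟨f_α : α < γ⟩` is a very strongly increasing sequence of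
functions from `ω` to `ω`, where `γ` is a limit ordinal of cofinality `ω₁`, then `F`
extends to a very strongly increasing sequence of successor length (consisting of
functions from `ω` to `ω`) if and only if there is `f : ω → ω` such that
`{α < γ : f_α <₀ f}` contains a club subset of `γ`. -/
theorem statement13 (F : Ordinal → ℕ → Ordinal) (γ : Ordinal) (hlim : Order.IsSuccLimit γ)
    (hcof : γ.cof = Cardinal.aleph 1)
    (hF : VeryStronglyIncreasingOn F γ)
    (hFomega : ∀ α < γ, ∀ m : ℕ, F α m < Ordinal.omega0) :
    (∃ δ : Ordinal, ∃ G : Ordinal → ℕ → Ordinal, γ ≤ δ + 1 ∧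
        VeryStronglyIncreasingOn G (δ + 1) ∧
        (∀ α < γ, G α = F α) ∧
        (∀ α < δ + 1, ∀ m : ℕ, G α m < Ordinal.omega0)) ↔
      (∃ f : ℕ → Ordinal, (∀ m : ℕ, f m < Ordinal.omega0) ∧
        ∃ C : Set Ordinal, IsClubIn C γ ∧ ∀ α ∈ C, LtN 0 (F α) f) := by
  have hγ : ℵ₀ < γ.cof := hcof ▸ aleph0_lt_aleph_one
  constructor
  · rintro ⟨δ, G, hγδ, hG, hGF, hGω⟩
    have hγδ := hlim.lt_add_one_of_le hγδ
    obtain ⟨C, hC, hCG⟩ := hG.2.1 γ hγδ hlim hγ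
    refine ⟨G γ, hGω γ hγδ, C, hC, fun α hα => ?_⟩
    rw [← hGF α (hC.1 hα)]
    exact hCG α hα
  · rintro ⟨f, hfω, C, hC, hCf⟩
    set G : Ordinal → ℕ → Ordinal := fun α => if α < γ then F α else f
    have hGF : ∀ α < γ, G α = F α := fun α hα => if_pos hα
    have hGγ : G γ = f := if_neg (lt_irrefl γ)
    refine ⟨γ, G, le_self_add, ?_, hGF, fun α _ m => ?_⟩
    · refine (hF.congr hGF).succ_of_club hγ.ne' hC fun α hα => ?_
      rw [hGF α (hC.1 hα), hGγ]
      exact hCf α hα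
    · by_cases hα : α < γ
      · rw [hGF α hα]; exact hFomega α hα m
      · rw [show G α = f from if_neg hα]; exact hfω m
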